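/- Let Z(Y,X) be a zoom space, let Y be a dense subspace of Ỹ, and let each X_i be a subspace of X̃_i, so that Z(Y,X) is a subspace of Z(Ỹ,X̃). Then Compl(Z(Y,X), Z(Ỹ,X̃)) = max{ Compl(Y,Ỹ), sup_{i∈I_Y} Compl(X_i, X̃_i) }, whenever at least one side of this equality is defined (i.e., the relevant set is Suslin-F in the corresponding ambient space). -/

import Mathlib

noncomputable section
open Classical Set Topology Filter Ordinal

universe u v

namespace FBorelPaper

/-! ### Ordinal parity -/

/-- The first uncountable ordinal. -/
def omega1 : Ordinal.{0} := Ordinal.omega 1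

/-- An ordinal `a = λ + m` (with `λ` limit or zero, `m < ω`) is *even* iff `m` is even. -/
def EvenOrd (a : Ordinal.{0}) : Prop := a % 2 = 0

/-- An ordinal `a = λ + m` (with `λ` limit or zero, `m < ω`) is *odd* iff `m` is odd. -/
def OddOrd (a : Ordinal.{0}) : Prop := a % 2 = 1

/-- For `a = λ + 2n + i` (with `λ` limit or zero, `n < ω`, `i ∈ {0,1}`),
`ordPrime a = λ + n` (the ordinal `α'` of the paper). -/
def ordPrime (a : Ordinal.{0}) : Ordinal.{0} :=
  Ordinal.omega0 * (a / Ordinal.omega0) + (a % Ordinal.omega0) / 2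

/-! ### The F-Borel hierarchy -/

/-- The `F`-Borel hierarchy of a topological space: `FBorel Y 0` is the family of closed
sets, and for `0 < a`, `FBorel Y a` consists of all countable unions (for odd `a`),
resp. countable intersections (for even `a`), of members of `⋃ b < a, FBorel Y b`. -/
def FBorel (Y : Type u) [TopologicalSpace Y] : Ordinal.{0} → Set (Set Y) :=
  WellFounded.fix Ordinal.lt_wf (C := fun _ => Set (Set Y)) fun a ih =>
    if a = 0 then { F | IsClosed F }
    else if EvenOrd a then
      { S | ∃ f : ℕ → Set Y, (∀ n, ∃ b, ∃ h : b < a, f n ∈ ih b h) ∧ S = ⋂ n, f n }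
    else
      { S | ∃ f : ℕ → Set Y, (∀ n, ∃ b, ∃ h : b < a, f n ∈ ih b h) ∧ S = ⋃ n, f n }

/-- The list `(σ 0, …, σ (k-1))` of the first `k` values of `σ : ℕ → ℕ`. -/
def seqPrefix (σ : ℕ → ℕ) (k : ℕ) : List ℕ := List.ofFn fun i : Fin k => σ i

/-- A Suslin scheme: a monotone family of sets indexed by finite sequences. -/
def IsSuslinScheme {Y : Type u} (C : List ℕ → Set Y) : Prop :=
  ∀ ⦃s t : List ℕ⦄, s <+: t → C t ⊆ C s

/-- The Suslin operation `A(C) = ⋃_{σ ∈ ω^ω} ⋂_k C(σ|k)`. -/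
def suslinOp {Y : Type u} (C : List ℕ → Set Y) : Set Y :=
  ⋃ σ : ℕ → ℕ, ⋂ k : ℕ, C (seqPrefix σ k)

/-- The Suslin-F subsets of `Y`: results of the Suslin operation applied to schemes of
closed sets. -/
def SuslinF (Y : Type u) [TopologicalSpace Y] : Set (Set Y) :=
  { S | ∃ C : List ℕ → Set Y, (∀ s, IsClosed (C s)) ∧ S = suslinOp C }

/-- The classes `F_a(Y)` for `a ≤ ω₁`, where `F_{ω₁}(Y)` is the class of Suslin-F sets. -/
def FClass (Y : Type u) [TopologicalSpace Y] (a : Ordinal.{0}) : Set (Set Y) :=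
  if a < omega1 then FBorel Y a else SuslinF Y

/-- `ComplIn Y X` is the complexity of `X` in `Y`: the least `a ≤ ω₁` with `X ∈ F_a(Y)`. -/
def ComplIn (Y : Type u) [TopologicalSpace Y] (X : Set Y) : Ordinal.{0} :=
  sInf { a : Ordinal.{0} | a ≤ omega1 ∧ X ∈ FClass Y a }

/-! ### Compactifications, K-analytic spaces, local complexity -/

/-- `(K, e)` is a compactification of `X`: `K` is compact Hausdorff and `e` is a dense
embedding of `X` into `K`. -/
def IsCompactification (X : Type u) [TopologicalSpace X] (K : Type u) [TopologicalSpace K]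
    (e : X → K) : Prop :=
  CompactSpace K ∧ T2Space K ∧ IsEmbedding e ∧ DenseRange e

/-- The set `Compl(X)` of all complexities attained by `X` in its compactifications. -/
def AttainedCompl (X : Type u) [TopologicalSpace X] : Set Ordinal.{0} :=
  { γ | ∃ (K : Type u) (_ : TopologicalSpace K) (e : X → K),
      IsCompactification X K e ∧ Set.range e ∈ SuslinF K ∧ γ = ComplIn K (Set.range e) }

/-- A topological space is K-analytic iff it embeds as a Suslin-F subset of some compact
Hausdorff space. -/
def IsKAnalytic (X : Type u) [TopologicalSpace X] : Prop :=
  ∃ (K : Type u) (_ : TopologicalSpace K) (e : X → K),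
    CompactSpace K ∧ T2Space K ∧ IsEmbedding e ∧ Set.range e ∈ SuslinF K

/-- The local complexity `Compl_y(X, Y)`: the least complexity of `cl(U) ∩ X` in `Y` over
all open neighborhoods `U` of `y` in `Y`. -/
def locComplAt (Y : Type u) [TopologicalSpace Y] (X : Set Y) (y : Y) : Ordinal.{0} :=
  sInf { γ : Ordinal.{0} | ∃ U : Set Y, IsOpen U ∧ y ∈ U ∧ γ = ComplIn Y (closure U ∩ X) }

/-- The local complexity `Compl_loc(X, Y) = sup_{x ∈ X} Compl_x(X, Y)`. -/
def locCompl (Y : Type u) [TopologicalSpace Y] (X : Set Y) : Ordinal.{0} :=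
  ⨆ x : X, locComplAt Y X (x : Y)

/-- The local complexity `Compl_locbar(X, Y) = sup_{y ∈ Y} Compl_y(X, Y)`. -/
def locComplBar (Y : Type u) [TopologicalSpace Y] (X : Set Y) : Ordinal.{0} :=
  ⨆ y : Y, locComplAt Y X y

/-! ### Trees on ω -/

/-- A tree on `ω`: a set of finite sequences closed under initial segments. -/
def IsTree (T : Set (List ℕ)) : Prop := ∀ ⦃s t : List ℕ⦄, s <+: t → t ∈ T → s ∈ T

/-- A tree is well-founded iff it carries no infinite branch. -/
def WellFoundedTree (T : Set (List ℕ)) : Prop := ¬ ∃ σ : ℕ → ℕ, ∀ k : ℕ, seqPrefix σ k ∈ T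

/-- `t` is a leaf of `T`: it belongs to `T` and has no immediate successor in `T`. -/
def IsLeafOf (T : Set (List ℕ)) (t : List ℕ) : Prop := t ∈ T ∧ ∀ n : ℕ, t ++ [n] ∉ T

/-- The tree `T^t = {s | t⌢s ∈ T}` corresponding to `t` in `T`. -/
def subtreeAt (T : Set (List ℕ)) (t : List ℕ) : Set (List ℕ) := { s | t ++ s ∈ T }

/-- The smallest tree containing a set `S` of finite sequences. -/
def clTr (S : Set (List ℕ)) : Set (List ℕ) := { u | ∃ s ∈ S, u <+: s }

/-- The leaf derivative: keep the elements having some proper extension in `T`. -/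
def leafDeriv (T : Set (List ℕ)) : Set (List ℕ) := { t ∈ T | ∃ s ∈ T, t <+: s ∧ t ≠ s }

/-- The derivative `D_iie`: keep the `t ∈ T` admitting infinitely many pairwise
incomparable extensions in `T` of pairwise different lengths. -/
def Diie (T : Set (List ℕ)) : Set (List ℕ) :=
  { t ∈ T | ∃ g : ℕ → List ℕ, (∀ n, g n ∈ T ∧ t <+: g n) ∧
      ∀ ⦃m n : ℕ⦄, m < n →
        (¬ g m <+: g n) ∧ (¬ g n <+: g m) ∧ (g m).length ≠ (g n).length }

/-- Transfinitely iterated derivative, starting from `cl_Tr S` and taking intersections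
at limit stages. -/
def iterDeriv (D : Set (List ℕ) → Set (List ℕ)) (S : Set (List ℕ)) (γ : Ordinal.{0}) :
    Set (List ℕ) :=
  Ordinal.limitRecOn γ (clTr S) (fun _ ih => D ih)
    (fun a _ ih => ⋂ b : Ordinal.{0}, ⋂ h : b < a, ih b h)

/-- The rank associated with the leaf derivative: the least `γ` such that the `(γ+1)`-st
iterated leaf derivative is empty, and `ω₁` if there is no such countable ordinal. -/
def leafRank (T : Set (List ℕ)) : Ordinal.{0} :=
  if ∃ γ : Ordinal.{0}, γ < omega1 ∧ iterDeriv leafDeriv T (γ + 1) = ∅ then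
    sInf { γ : Ordinal.{0} | iterDeriv leafDeriv T (γ + 1) = ∅ }
  else omega1

/-- `E` is the canonical extension of the `l(T)`-scheme `H` to the whole of `T`:
it agrees with `H` on the leaves of `T`, and at a non-leaf `t ∈ T` it is the union
(resp. the intersection) of its values at the immediate successors of `t` in `T` when
the leaf-rank of `T^t` is odd (resp. even). -/
def IsSchemeExtension (Y : Type u) [TopologicalSpace Y] (T : Set (List ℕ))
    (H E : List ℕ → Set Y) : Prop :=
  (∀ t, IsLeafOf T t → E t = H t) ∧
  (∀ t ∈ T, ¬ IsLeafOf T t → OddOrd (leafRank (subtreeAt T t)) →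
      E t = ⋃ n ∈ { n : ℕ | t ++ [n] ∈ T }, E (t ++ [n])) ∧
  (∀ t ∈ T, ¬ IsLeafOf T t → EvenOrd (leafRank (subtreeAt T t)) →
      E t = ⋂ n ∈ { n : ℕ | t ++ [n] ∈ T }, E (t ++ [n]))

/-- `H` (an `l(T)`-scheme of subsets of `X`) is a *universal simple `F_α`-representation*
of `X`: `r_l(T) ≤ α`, and for every space `Y` containing (a copy of) `X`, the extension
of the scheme of closures `(cl_Y (H t))_t` computes `X` at the root. -/
def HasUniversalSimpleRep (X : Type u) [TopologicalSpace X] (α : Ordinal.{0}) : Prop :=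
  ∃ (T : Set (List ℕ)) (H : List ℕ → Set X), IsTree T ∧ WellFoundedTree T ∧ [] ∈ T ∧
    leafRank T ≤ α ∧
    ∀ (Y : Type u) (_ : TopologicalSpace Y) (e : X → Y), IsEmbedding e →
      ∃ E : List ℕ → Set Y,
        IsSchemeExtension Y T (fun t => closure (e '' H t)) E ∧ E [] = Set.range e

/-! ### Canonical trees -/

/-- Auxiliary indices for the canonical trees: at a successor `a = b + 1` every index is
`b`, and at a countable limit the indices enumerate all ordinals `< a` injectively. -/
def canonIdx (a : Ordinal.{0}) (n : ℕ) : Ordinal.{0} :=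
  if hs : ∃ b, a = b + 1 then hs.choose
  else if hf : ∃ f : ℕ → Ordinal.{0}, Function.Injective f ∧ Set.range f = Set.Iio a then
    hf.choose n
  else 0

theorem canonIdx_lt {a : Ordinal.{0}} (h0 : a ≠ 0) (n : ℕ) : canonIdx a n < a := by
  unfold canonIdx
  split
  · next hs =>
      conv_rhs => rw [hs.choose_spec]
      rw [Ordinal.add_one_eq_succ]
      exact Order.lt_succ _
  · split
    · next hf =>
        have hmem : hf.choose n ∈ Set.range hf.choose := Set.mem_range_self n
        rw [hf.choose_spec.2] at hmem
        exact hmem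
    · first
        | exact pos_iff_ne_zero.mpr h0
        | exact lt_of_le_of_ne (Ordinal.zero_le _) (Ne.symm h0)

/-- The canonical "maximal" trees `T_α` of leaf-rank `α < ω₁` (with `T_α = ω^{<ω}` for
`α ≥ ω₁`): `T_0 = {∅}`, `T_{α+1} = {∅} ∪ ⋃_n n⌢T_α`, and at countable limits
`T_α = {∅} ∪ ⋃_n n⌢T_{π_α(n)}` for an injective enumeration `π_α` of `α`. -/
def canonTree : Ordinal.{0} → Set (List ℕ) :=
  WellFounded.fix Ordinal.lt_wf (C := fun _ => Set (List ℕ)) fun a ih =>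
    if h0 : a = 0 then {([] : List ℕ)}
    else if omega1 ≤ a then Set.univ
    else {([] : List ℕ)} ∪ ⋃ n : ℕ, (List.cons n) '' ih (canonIdx a n) (canonIdx_lt h0 n)

/-- The canonical trees `T^c_α`: `T_{α'}` for even `α`, and `{∅} ∪ 1⌢T_{α'}` for odd `α`. -/
def canonTreeC (a : Ordinal.{0}) : Set (List ℕ) :=
  if EvenOrd a then canonTree (ordPrime a)
  else {([] : List ℕ)} ∪ (List.cons 1) '' canonTree (ordPrime a)

/-- The canonical trees `T^c_{α,i} = {∅} ∪ i⌢T_{α'}` (for odd `α`). -/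
def canonTreeCi (a : Ordinal.{0}) (i : ℕ) : Set (List ℕ) :=
  {([] : List ℕ)} ∪ (List.cons i) '' canonTree (ordPrime a)

/-! ### Admissible maps, `R_T` and regular representations -/

/-- An admissible map on a tree `T`: monotone w.r.t. extension, with
`|φ(t)| = t(0) + ⋯ + t(|t|-1)` for all `t ∈ T`. -/
def Admissible (T : Set (List ℕ)) (φ : List ℕ → List ℕ) : Prop :=
  (∀ ⦃s t : List ℕ⦄, s ∈ T → t ∈ T → s <+: t → φ s <+: φ t) ∧
  (∀ t ∈ T, (φ t).length = t.sum)

/-- `R_T(C)`: the points of `C(∅)` admitting an admissible witness map along `T`. -/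
def RT {Y : Type u} (T : Set (List ℕ)) (C : List ℕ → Set Y) : Set Y :=
  { x | x ∈ C [] ∧ ∃ φ : List ℕ → List ℕ, Admissible T φ ∧ ∀ t ∈ T, x ∈ C (φ t) }

/-- `R_α(C) = R_{T^c_α}(C)`. -/
def Ralpha {Y : Type u} (a : Ordinal.{0}) (C : List ℕ → Set Y) : Set Y :=
  RT (canonTreeC a) C

/-- A Suslin scheme `C` of subsets of `X ⊆ Y` is *complete on `X`*: it is a Suslin scheme
on `X` (it consists of subsets of `X` and the Suslin operation applied to it covers `X`)
such that every nontrivial filter containing, for each `n`, a set `C s` with `|s| = n`,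
has an accumulation point in `X`. -/
def IsCompleteOn (Y : Type u) [TopologicalSpace Y] (X : Set Y) (C : List ℕ → Set Y) :
    Prop :=
  IsSuslinScheme C ∧ (∀ s, C s ⊆ X) ∧ X ⊆ suslinOp C ∧
  ∀ F : Filter Y, F.NeBot → (∀ n : ℕ, ∃ s : List ℕ, s.length = n ∧ C s ∈ F) →
    ∃ x ∈ X, ClusterPt x F

/-- The tree `S_C(y)` of finite sequences `s` with `y ∈ cl_Y (C s)`. -/
def SCtree (Y : Type u) [TopologicalSpace Y] (C : List ℕ → Set Y) (y : Y) :
    Set (List ℕ) :=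
  { s : List ℕ | y ∈ closure (C s) }

/-! ### Zoom spaces -/

/-- The set of isolated points of a topological space. -/
def IsolPts (Y : Type u) [TopologicalSpace Y] : Set Y := { y | IsOpen ({y} : Set Y) }

/-- The underlying set of the zoom space `Z(Y, X)`: the non-isolated points of `Y`
together with the disjoint union of the spaces `X i`, `i ∈ I_Y`. -/
def ZoomCarrier (Y : Type u) [TopologicalSpace Y] (X : IsolPts Y → Type v) :
    Type (max u v) :=
  ({ y : Y // y ∉ IsolPts Y }) ⊕ ((i : IsolPts Y) × X i)

/-- The basic set `V_U ⊆ Z(Y, X)` associated with `U ⊆ Y`: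
`V_U = (U ∖ I_Y) ∪ ⋃ {X i | i ∈ U ∩ I_Y}`. -/
def zoomVSet (Y : Type u) [TopologicalSpace Y] (X : IsolPts Y → Type v) (U : Set Y) :
    Set (ZoomCarrier Y X) :=
  { z | Sum.elim (fun y : { y : Y // y ∉ IsolPts Y } => (y : Y) ∈ U)
      (fun p : (i : IsolPts Y) × X i => (p.1 : Y) ∈ U) z }

/-- The topology of the zoom space `Z(Y, X)`, generated by the open subsets of the
spaces `X i` together with the sets `V_U` for `U` open in `Y`. -/
instance zoomTopology (Y : Type u) [TopologicalSpace Y] (X : IsolPts Y → Type v)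
    [∀ i, TopologicalSpace (X i)] : TopologicalSpace (ZoomCarrier Y X) :=
  TopologicalSpace.generateFrom
    ({ B | ∃ (i : IsolPts Y) (W : Set (X i)), IsOpen W ∧
        B = Sum.inr '' ((Sigma.mk i) '' W) } ∪
     { B | ∃ U : Set Y, IsOpen U ∧ B = zoomVSet Y X U })

/-- The subset of `Z(Y, X)` which is the underlying set of the zoom space `Z(Ys, A)` of
a subspace `Ys ⊆ Y` with respect to subspaces `A i ⊆ X i`
(here the isolated points of `Ys` are identified with those of `Y`). -/
def zoomSub (Y : Type u) [TopologicalSpace Y] (X : IsolPts Y → Type v) (Ys : Set Y)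
    (A : ∀ i : IsolPts Y, Set (X i)) : Set (ZoomCarrier Y X) :=
  { z | Sum.elim (fun y : { y : Y // y ∉ IsolPts Y } => (y : Y) ∈ Ys)
      (fun p : (i : IsolPts Y) × X i => p.2 ∈ A p.1) z }

/-! ### Broom sets and broom spaces -/

/-- A forking sequence: a sequence of nonempty finite sequences with pairwise distinct
first entries. -/
def IsForking (f : ℕ → List ℕ) : Prop :=
  (∀ n, f n ≠ []) ∧ ∀ ⦃m n : ℕ⦄, m ≠ n → (f m).head? ≠ (f n).head?

/-- The hierarchy of finite broom sets: `B ∈ B_α` iff `IsBroomB α B`.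
`B_0 = {{∅}}`; for odd `α`, `B_α = B_{<α} ∪ {h⌢B | B ∈ B_{α-1}, h ∈ ω^{<ω}}`; for even
`α > 0`, `B_α = B_{<α} ∪ {⋃_n f_n⌢B_n | B_n ∈ B_{<α}, (f_n) a forking sequence}`. -/
inductive IsBroomB : Ordinal.{0} → Set (List ℕ) → Prop
  | base : IsBroomB 0 {[]}
  | mono {β α : Ordinal.{0}} {B : Set (List ℕ)} : β < α → IsBroomB β B → IsBroomB α B
  | odd {β : Ordinal.{0}} {B : Set (List ℕ)} (h : List ℕ) : EvenOrd β → IsBroomB β B →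
      IsBroomB (β + 1) ((fun s => h ++ s) '' B)
  | even {α : Ordinal.{0}} {f : ℕ → List ℕ} {Bs : ℕ → Set (List ℕ)}
      (g : ℕ → Ordinal.{0}) :
      0 < α → EvenOrd α → IsForking f →
      (∀ n : ℕ, g n < α) → (∀ n : ℕ, IsBroomB (g n) (Bs n)) →
      IsBroomB α (⋃ n : ℕ, (fun s => f n ++ s) '' Bs n)

/-- The infinite sequence `s⌢ν` obtained by extending the finite sequence `s` by `ν`. -/
def seqAppend (s : List ℕ) (ν : ℕ → ℕ) : ℕ → ℕ :=
  fun k => if h : k < s.length then s.get ⟨k, h⟩ else ν (k - s.length)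

/-- `A` is a broom-extension of `B`:
`A = {s⌢f^s_n⌢ν^s_n | s ∈ B, n ∈ ω}` for forking sequences `(f^s_n)_n, s ∈ B`, and
points `ν^s_n ∈ ω^ω`. -/
def IsBroomExtension (B : Set (List ℕ)) (A : Set (ℕ → ℕ)) : Prop :=
  ∃ (f : List ℕ → ℕ → List ℕ) (ν : List ℕ → ℕ → (ℕ → ℕ)),
    (∀ s ∈ B, IsForking (f s)) ∧
    A = { σ : ℕ → ℕ | ∃ s ∈ B, ∃ n : ℕ, σ = seqAppend (s ++ f s n) (ν s n) }

/-- The hierarchy of infinite broom sets: `A ∈ A_α` iff `A` is a broom-extension of some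
`B ∈ B_α`. -/
def IsBroomA (α : Ordinal.{0}) (A : Set (ℕ → ℕ)) : Prop :=
  ∃ B : Set (List ℕ), IsBroomB α B ∧ IsBroomExtension B A

/-- `u` is a finite initial segment of the infinite sequence `σ`. -/
def InfExtends (u : List ℕ) (σ : ℕ → ℕ) : Prop := seqPrefix σ u.length = u

/-- The tree of all finite initial segments of members of a set of infinite sequences. -/
def clTrInf (S : Set (ℕ → ℕ)) : Set (List ℕ) := { u | ∃ σ ∈ S, InfExtends u σ }

/-- The broom space `T_𝒜` on `ω^ω ∪ {∞}` (with `∞ = none`): every point of `ω^ω` is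
isolated, and the neighborhood subbasis at `∞` consists of the complements of single
points of `ω^ω` and of the complements of the sets `A ∈ 𝒜`. -/
def broomTop (𝒜 : Set (Set (ℕ → ℕ))) : TopologicalSpace (Option (ℕ → ℕ)) :=
  TopologicalSpace.generateFrom
    ({ S | ∃ σ : ℕ → ℕ, S = {Option.some σ} } ∪
     { S | ∃ σ : ℕ → ℕ, S = insert Option.none (Option.some '' ({σ}ᶜ)) } ∪
     { S | ∃ A ∈ 𝒜, S = insert Option.none (Option.some '' Aᶜ) })

/-!
Since `Y` is dense, it contains every isolated point of `Ỹ`, so `Z(Y, X)` is the preimage of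
`Y` under the collapse map `Z(Ỹ, X̃) → Ỹ`, intersected with the set of points whose coordinate
in each `X̃ i` lies in `X i`. The pieces `X̃ i` are pairwise disjoint open subsets of the zoom
space, so that set is built from the `X i` by the very countable unions and intersections that
build the `X i`; hence `Z(Y, X)` is at most as complex as the maximum. Conversely `Y` and the
`X i` are preimages of `Z(Y, X)` under continuous maps (a section `Ỹ → Z(Ỹ, X̃)` through points
of the `X i`, and the inclusions `X̃ i → Z(Ỹ, X̃)`), and continuous preimages do not raise
complexity.
-/

section SetOperations

variable {Y : Type u} {Z : Type v}

def levelOp (a : Ordinal.{0}) (f : ℕ → Set Y) : Set Y :=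
  if EvenOrd a then ⋂ n, f n else ⋃ n, f n

theorem levelOp_const (a : Ordinal.{0}) (S : Set Y) : levelOp a (fun _ => S) = S := by
  unfold levelOp
  split_ifs
  exacts [iInter_const S, iUnion_const S]

theorem preimage_levelOp (f : Y → Z) (a : Ordinal.{0}) (g : ℕ → Set Z) :
    f ⁻¹' levelOp a g = levelOp a fun n => f ⁻¹' g n := by
  unfold levelOp
  split_ifs
  exacts [preimage_iInter, preimage_iUnion]

theorem levelOp_inter_levelOp (a : Ordinal.{0}) (f g : ℕ → Set Y) :
    levelOp a f ∩ levelOp a g = levelOp a fun k => f k.unpair.1 ∩ g k.unpair.2 := by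
  ext x
  unfold levelOp
  split_ifs <;> simp only [mem_inter_iff, mem_iInter, mem_iUnion]
  · refine ⟨fun h k => ⟨h.1 _, h.2 _⟩, fun h => ⟨fun n => ?_, fun m => ?_⟩⟩
    · simpa using (h (Nat.pair n 0)).1
    · simpa using (h (Nat.pair 0 m)).2
  · refine ⟨fun ⟨⟨n, hn⟩, ⟨m, hm⟩⟩ => ⟨Nat.pair n m, by simpa using hn, by simpa using hm⟩,
      fun ⟨k, hf, hg⟩ => ⟨⟨_, hf⟩, ⟨_, hg⟩⟩⟩

theorem length_seqPrefix (σ : ℕ → ℕ) (k : ℕ) : (seqPrefix σ k).length = k := by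
  simp [seqPrefix]

theorem seqPrefix_succ (σ : ℕ → ℕ) (k : ℕ) :
    seqPrefix σ (k + 1) = σ 0 :: seqPrefix (fun i => σ (i + 1)) k := by
  simp [seqPrefix, List.ofFn_succ]

theorem mem_suslinOp {C : List ℕ → Set Y} {x : Y} :
    x ∈ suslinOp C ↔ ∃ σ : ℕ → ℕ, ∀ k, x ∈ C (seqPrefix σ k) := by
  simp [suslinOp]

end SetOperations

section FBorelHierarchy

variable {Y : Type u} {Z : Type v} [TopologicalSpace Y] [TopologicalSpace Z]

theorem fborel_zero : FBorel Y 0 = {F | IsClosed F} := by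
  rw [FBorel, WellFounded.fix_eq, if_pos rfl]

theorem mem_fborel_iff {a : Ordinal.{0}} (ha : a ≠ 0) {S : Set Y} :
    S ∈ FBorel Y a ↔
      ∃ f : ℕ → Set Y, (∀ n, ∃ b < a, f n ∈ FBorel Y b) ∧ S = levelOp a f := by
  rw [FBorel, WellFounded.fix_eq, if_neg ha]
  unfold levelOp
  split_ifs <;> simp only [mem_ofPred_eq, exists_prop]

theorem mem_fborel_of_isClosed {F : Set Y} (hF : IsClosed F) (a : Ordinal.{0}) :
    F ∈ FBorel Y a := by
  rcases eq_or_ne a 0 with rfl | ha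
  · rwa [fborel_zero]
  · exact (mem_fborel_iff ha).2
      ⟨fun _ => F, fun _ => ⟨0, pos_iff_ne_zero.2 ha, by rwa [fborel_zero]⟩,
        (levelOp_const a F).symm⟩

theorem fborel_mono {a b : Ordinal.{0}} (hab : a ≤ b) : FBorel Y a ⊆ FBorel Y b := by
  rcases hab.eq_or_lt with rfl | hlt
  · exact subset_rfl
  · exact fun S hS => (mem_fborel_iff hlt.ne_bot).2
      ⟨fun _ => S, fun _ => ⟨a, hlt, hS⟩, (levelOp_const b S).symm⟩

theorem fborel_preimage {f : Y → Z} (hf : Continuous f) {a : Ordinal.{0}} {S : Set Z}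
    (hS : S ∈ FBorel Z a) : f ⁻¹' S ∈ FBorel Y a := by
  induction a using WellFoundedLT.induction generalizing S with
  | ind a ih =>
  rcases eq_or_ne a 0 with rfl | ha
  · rw [fborel_zero] at hS ⊢
    exact hS.preimage hf
  obtain ⟨g, hg, rfl⟩ := (mem_fborel_iff ha).1 hS
  refine (mem_fborel_iff ha).2 ⟨fun n => f ⁻¹' g n, fun n => ?_, preimage_levelOp f a g⟩
  obtain ⟨b, hb, hgb⟩ := hg n
  exact ⟨b, hb, ih b hb hgb⟩

theorem fborel_inter {a : Ordinal.{0}} {S T : Set Y} (hS : S ∈ FBorel Y a)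
    (hT : T ∈ FBorel Y a) : S ∩ T ∈ FBorel Y a := by
  induction a using WellFoundedLT.induction generalizing S T with
  | ind a ih =>
  rcases eq_or_ne a 0 with rfl | ha
  · rw [fborel_zero] at hS hT ⊢
    exact hS.inter hT
  obtain ⟨f, hf, rfl⟩ := (mem_fborel_iff ha).1 hS
  obtain ⟨g, hg, rfl⟩ := (mem_fborel_iff ha).1 hT
  refine (mem_fborel_iff ha).2 ⟨_, fun k => ?_, levelOp_inter_levelOp a f g⟩
  obtain ⟨b, hb, hfb⟩ := hf k.unpair.1
  obtain ⟨c, hc, hgc⟩ := hg k.unpair.2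
  exact ⟨max b c, max_lt hb hc, ih _ (max_lt hb hc)
    (fborel_mono (le_max_left b c) hfb) (fborel_mono (le_max_right b c) hgc)⟩

theorem exists_cofinal_seq_of_lt_omega1 {a : Ordinal.{0}} (ha0 : a ≠ 0) (ha : a < omega1) :
    ∃ c : ℕ → Ordinal.{0}, (∀ k, c k < a) ∧ ∀ b < a, ∃ k, b ≤ c k := by
  have hcount : (Iio a).Countable := by
    rw [← Cardinal.le_aleph0_iff_set_countable, Cardinal.mk_Iio_ordinal, Cardinal.lift_le_aleph0,
      ← Cardinal.lt_aleph_one_iff, ← Cardinal.lt_ord, Cardinal.ord_aleph]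
    exact ha
  obtain ⟨c, hc⟩ := hcount.exists_eq_range ⟨0, pos_iff_ne_zero.2 ha0⟩
  refine ⟨c, fun k => ?_, fun b hb => ?_⟩
  · have hk : c k ∈ Iio a := hc ▸ mem_range_self k
    exact hk
  · obtain ⟨k, hk⟩ : b ∈ range c := hc ▸ hb
    exact ⟨k, hk.ge⟩

/-- A witness that fits in no level `c k` is replaced by the neutral element of `levelOp a`.
Used with one `c` for all the `X i`, this aligns uncountably many witness sequences. -/
theorem exists_levelOp_of_mem_fborel {a : Ordinal.{0}} (ha : a ≠ 0) {c : ℕ → Ordinal.{0}}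
    (hc : ∀ b < a, ∃ k, b ≤ c k) {S : Set Y} (hS : S ∈ FBorel Y a) :
    ∃ f : ℕ → Set Y, (∀ k, f k ∈ FBorel Y (c k.unpair.2)) ∧ S = levelOp a f := by
  obtain ⟨f, hf, rfl⟩ := (mem_fborel_iff ha).1 hS
  choose β hβ hfβ using hf
  let pad : Set Y := if EvenOrd a then univ else ∅
  refine ⟨fun k => if β k.unpair.1 ≤ c k.unpair.2 then f k.unpair.1 else pad,
    fun k => ?_, ?_⟩
  · dsimp only
    split_ifs with hk
    · exact fborel_mono hk (hfβ _)
    · exact mem_fborel_of_isClosed (by unfold pad; split_ifs <;> simp) _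
  · ext x
    simp only [levelOp, pad]
    split_ifs with he <;> simp only [mem_iInter, mem_iUnion]
    · refine ⟨fun h k => ?_, fun h n => ?_⟩
      · split_ifs
        exacts [h _, trivial]
      · obtain ⟨k, hk⟩ := hc _ (hβ n)
        simpa [hk] using h (Nat.pair n k)
    · refine ⟨fun ⟨n, hn⟩ => ?_, fun ⟨k, hk⟩ => ?_⟩
      · obtain ⟨k, hk⟩ := hc _ (hβ n)
        exact ⟨Nat.pair n k, by simpa [hk] using hn⟩
      · split_ifs at hk
        exacts [⟨_, hk⟩, hk.elim]

end FBorelHierarchy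

section SuslinF

variable {Y : Type u} {Z : Type v} [TopologicalSpace Y] [TopologicalSpace Z]

theorem mem_suslinF_of_isClosed {F : Set Y} (hF : IsClosed F) : F ∈ SuslinF Y :=
  ⟨fun _ => F, fun _ => hF, by ext; simp [mem_suslinOp]⟩

theorem suslinF_preimage {f : Y → Z} (hf : Continuous f) {S : Set Z} (hS : S ∈ SuslinF Z) :
    f ⁻¹' S ∈ SuslinF Y := by
  obtain ⟨C, hC, rfl⟩ := hS
  refine ⟨fun s => f ⁻¹' C s, fun s => (hC s).preimage hf, ?_⟩
  simp only [suslinOp, preimage_iUnion, preimage_iInter]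

theorem suslinF_iUnion {S : ℕ → Set Y} (hS : ∀ n, S n ∈ SuslinF Y) :
    (⋃ n, S n) ∈ SuslinF Y := by
  choose C hC hSC using hS
  refine ⟨fun | [] => univ | n :: s => C n s, fun s => by cases s <;> simp [hC], ?_⟩
  ext x
  simp only [mem_iUnion, hSC, mem_suslinOp]
  constructor
  · rintro ⟨n, σ, hσ⟩
    refine ⟨fun k => if k = 0 then n else σ (k - 1), fun k => ?_⟩
    cases k with
    | zero => trivial
    | succ k => simpa [seqPrefix_succ] using hσ k
  · rintro ⟨σ, hσ⟩
    exact ⟨σ 0, fun i => σ (i + 1), fun k => by simpa [seqPrefix_succ] using hσ (k + 1)⟩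

def rowPrefix (s : List ℕ) (n k : ℕ) : List ℕ :=
  List.ofFn fun i : Fin k => s.getD (Nat.pair n i) 0

theorem rowPrefix_seqPrefix (σ : ℕ → ℕ) {n k m : ℕ} (h : Nat.pair n k < m) :
    rowPrefix (seqPrefix σ m) n k = seqPrefix (fun i => σ (Nat.pair n i)) k := by
  refine List.ofFn_inj.2 (funext fun i => ?_)
  have hi : Nat.pair n i < m := (Nat.pair_lt_pair_right n i.2).trans h
  rw [List.getD_eq_getElem _ _ (by simpa [seqPrefix] using hi)]
  simp [seqPrefix]

/-- The schemes are interleaved along the rows of `Nat.pair`: stage `m` of the combined scheme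
checks stage `k` of the `n`-th scheme for every `Nat.pair n k < m`. -/
theorem suslinF_iInter {S : ℕ → Set Y} (hS : ∀ n, S n ∈ SuslinF Y) :
    (⋂ n, S n) ∈ SuslinF Y := by
  choose C hC hSC using hS
  refine ⟨fun s => ⋂ j < s.length, C j.unpair.1 (rowPrefix s j.unpair.1 j.unpair.2),
    fun s => isClosed_biInter fun j _ => hC _ _, ?_⟩
  ext x
  simp only [mem_iInter, hSC, mem_suslinOp, length_seqPrefix]
  constructor
  · intro h
    choose σ hσ using h
    refine ⟨fun j => σ j.unpair.1 j.unpair.2, fun m j hj => ?_⟩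
    rw [rowPrefix_seqPrefix _ (by rwa [Nat.pair_unpair])]
    simpa only [Nat.unpair_pair] using hσ j.unpair.1 j.unpair.2
  · rintro ⟨σ, hσ⟩ n
    refine ⟨fun i => σ (Nat.pair n i), fun k => ?_⟩
    have := hσ (Nat.pair n k + 1) (Nat.pair n k) (Nat.lt_succ_self _)
    rwa [Nat.unpair_pair, rowPrefix_seqPrefix _ (Nat.lt_succ_self _)] at this

theorem suslinF_inter {S T : Set Y} (hS : S ∈ SuslinF Y) (hT : T ∈ SuslinF Y) :
    S ∩ T ∈ SuslinF Y := by
  have hST : S ∩ T = ⋂ n : ℕ, if n = 0 then S else T := by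
    ext x
    simp only [mem_inter_iff, mem_iInter]
    exact ⟨fun h n => by split_ifs; exacts [h.1, h.2],
      fun h => ⟨by simpa using h 0, by simpa using h 1⟩⟩
  rw [hST]
  exact suslinF_iInter fun n => by split_ifs; exacts [hS, hT]

theorem levelOp_mem_suslinF (a : Ordinal.{0}) {f : ℕ → Set Y} (hf : ∀ n, f n ∈ SuslinF Y) :
    levelOp a f ∈ SuslinF Y := by
  unfold levelOp
  split_ifs
  exacts [suslinF_iInter hf, suslinF_iUnion hf]

theorem fborel_subset_suslinF (a : Ordinal.{0}) : FBorel Y a ⊆ SuslinF Y := by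
  induction a using WellFoundedLT.induction with
  | ind a ih =>
  intro S hS
  rcases eq_or_ne a 0 with rfl | ha
  · rw [fborel_zero] at hS
    exact mem_suslinF_of_isClosed hS
  obtain ⟨f, hf, rfl⟩ := (mem_fborel_iff ha).1 hS
  refine levelOp_mem_suslinF a fun n => ?_
  obtain ⟨b, hb, hfb⟩ := hf n
  exact ih b hb hfb

end SuslinF

section Complexity

variable {Y : Type u} {Z : Type v} [TopologicalSpace Y] [TopologicalSpace Z]

theorem fclass_subset_suslinF (a : Ordinal.{0}) : FClass Y a ⊆ SuslinF Y := by
  unfold FClass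
  split_ifs
  exacts [fborel_subset_suslinF a, subset_rfl]

theorem fclass_mono {a b : Ordinal.{0}} (hab : a ≤ b) (hb : b ≤ omega1) :
    FClass Y a ⊆ FClass Y b := by
  rcases hab.eq_or_lt with rfl | hlt
  · exact subset_rfl
  unfold FClass
  rw [if_pos (hlt.trans_le hb)]
  split_ifs
  exacts [fborel_mono hab, fborel_subset_suslinF a]

theorem fclass_inter {a : Ordinal.{0}} {S T : Set Y} (hS : S ∈ FClass Y a)
    (hT : T ∈ FClass Y a) : S ∩ T ∈ FClass Y a := by
  unfold FClass at *
  split_ifs at *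
  exacts [fborel_inter hS hT, suslinF_inter hS hT]

theorem fclass_preimage {f : Y → Z} (hf : Continuous f) {a : Ordinal.{0}} {S : Set Z}
    (hS : S ∈ FClass Z a) : f ⁻¹' S ∈ FClass Y a := by
  unfold FClass at *
  split_ifs at *
  exacts [fborel_preimage hf hS, suslinF_preimage hf hS]

theorem complIn_le {X : Set Y} {a : Ordinal.{0}} (ha : a ≤ omega1) (hX : X ∈ FClass Y a) :
    ComplIn Y X ≤ a :=
  csInf_le' ⟨ha, hX⟩

theorem complIn_mem {X : Set Y} (hX : X ∈ SuslinF Y) :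
    ComplIn Y X ≤ omega1 ∧ X ∈ FClass Y (ComplIn Y X) :=
  csInf_mem (s := {a | a ≤ omega1 ∧ X ∈ FClass Y a})
    ⟨omega1, le_rfl, by rwa [FClass, if_neg (lt_irrefl _)]⟩

theorem complIn_preimage_le {f : Y → Z} (hf : Continuous f) {S : Set Z} (hS : S ∈ SuslinF Z) :
    ComplIn Y (f ⁻¹' S) ≤ ComplIn Z S :=
  complIn_le (complIn_mem hS).1 (fclass_preimage hf (complIn_mem hS).2)

end Complexity

theorem isolPts_subset_of_dense {Y : Type u} [TopologicalSpace Y] {D : Set Y} (hD : Dense D) :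
    IsolPts Y ⊆ D := fun y hy => by
  obtain ⟨x, hx, rfl⟩ := hD.exists_mem_open hy (singleton_nonempty y)
  exact hx

section Zoom

variable {Y : Type u} [TopologicalSpace Y] {X : IsolPts Y → Type v}

variable (X) in
def zoomInl (y : {y : Y // y ∉ IsolPts Y}) : ZoomCarrier Y X :=
  Sum.inl y

variable (X) in
def zoomIncl (i : IsolPts Y) (x : X i) : ZoomCarrier Y X :=
  Sum.inr ⟨i, x⟩

variable (X) in
def zoomProj : ZoomCarrier Y X → Y :=
  Sum.elim (↑) fun p => ↑p.1

def zoomSection (pt : ∀ i, X i) (y : Y) : ZoomCarrier Y X :=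
  if h : y ∈ IsolPts Y then zoomIncl X ⟨y, h⟩ (pt ⟨y, h⟩) else zoomInl X ⟨y, h⟩

theorem ZoomCarrier.set_ext {S T : Set (ZoomCarrier Y X)}
    (hl : ∀ y, zoomInl X y ∈ S ↔ zoomInl X y ∈ T)
    (hr : ∀ i x, zoomIncl X i x ∈ S ↔ zoomIncl X i x ∈ T) : S = T :=
  Set.ext fun | .inl y => hl y | .inr ⟨i, x⟩ => hr i x

@[simp]
theorem mem_zoomSub_zoomInl {D : Set Y} {A : ∀ i, Set (X i)} {y : {y : Y // y ∉ IsolPts Y}} :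
    zoomInl X y ∈ zoomSub Y X D A ↔ (y : Y) ∈ D :=
  Iff.rfl

@[simp]
theorem mem_zoomSub_zoomIncl {D : Set Y} {A : ∀ i, Set (X i)} {i : IsolPts Y} {x : X i} :
    zoomIncl X i x ∈ zoomSub Y X D A ↔ x ∈ A i :=
  Iff.rfl

@[simp]
theorem zoomProj_zoomInl (y : {y : Y // y ∉ IsolPts Y}) : zoomProj X (zoomInl X y) = y :=
  rfl

@[simp]
theorem zoomProj_zoomIncl (i : IsolPts Y) (x : X i) : zoomProj X (zoomIncl X i x) = i :=
  rfl

theorem zoomProj_zoomSection (pt : ∀ i, X i) (y : Y) : zoomProj X (zoomSection pt y) = y := by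
  by_cases h : y ∈ IsolPts Y <;> simp [zoomSection, h]

theorem zoomProj_preimage (U : Set Y) : zoomProj X ⁻¹' U = zoomVSet Y X U :=
  ZoomCarrier.set_ext (fun _ => Iff.rfl) fun _ _ => Iff.rfl

theorem zoomIncl_preimage_zoomSub (i : IsolPts Y) (D : Set Y) (A : ∀ i, Set (X i)) :
    zoomIncl X i ⁻¹' zoomSub Y X D A = A i :=
  rfl

theorem zoomSection_preimage_zoomSub {D : Set Y} {A : ∀ i, Set (X i)} (hD : IsolPts Y ⊆ D)
    {pt : ∀ i, X i} (hpt : ∀ i, pt i ∈ A i) : zoomSection pt ⁻¹' zoomSub Y X D A = D := by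
  ext y
  by_cases h : y ∈ IsolPts Y
  · simp [zoomSection, h, hpt, hD h]
  · simp [zoomSection, h]

theorem zoomSub_eq_preimage_inter {D : Set Y} (hD : IsolPts Y ⊆ D) (A : ∀ i, Set (X i)) :
    zoomSub Y X D A = zoomProj X ⁻¹' D ∩ zoomSub Y X univ A := by
  refine ZoomCarrier.set_ext (fun y => ?_) fun i x => ?_
  · simp
  · simp [hD i.2]

/-- Each point of the zoom space lies in at most one piece `X i`, so the operations
commute. -/
theorem zoomSub_univ_levelOp (a : Ordinal.{0}) (f : ∀ i, ℕ → Set (X i)) :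
    zoomSub Y X univ (fun i => levelOp a (f i)) =
      levelOp a fun n => zoomSub Y X univ fun i => f i n := by
  unfold levelOp
  split_ifs <;> refine ZoomCarrier.set_ext (fun y => ?_) fun i x => ?_ <;> simp

theorem zoomSub_univ_suslinOp (C : ∀ i, List ℕ → Set (X i)) :
    zoomSub Y X univ (fun i => suslinOp (C i)) =
      suslinOp fun s => zoomSub Y X univ fun i => C i s := by
  refine ZoomCarrier.set_ext (fun y => ?_) fun i x => ?_ <;> simp [suslinOp]

variable [∀ i, TopologicalSpace (X i)]

theorem isOpen_image_zoomIncl (i : IsolPts Y) {W : Set (X i)} (hW : IsOpen W) :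
    IsOpen (zoomIncl X i '' W) :=
  TopologicalSpace.isOpen_generateFrom_of_mem (Or.inl ⟨i, W, hW, by rw [image_image]; rfl⟩)

theorem isOpen_zoomVSet {U : Set Y} (hU : IsOpen U) : IsOpen (zoomVSet Y X U) :=
  TopologicalSpace.isOpen_generateFrom_of_mem (Or.inr ⟨U, hU, rfl⟩)

theorem continuous_zoomProj : Continuous (zoomProj X) :=
  continuous_def.2 fun U hU => by
    rw [zoomProj_preimage]
    exact isOpen_zoomVSet hU

theorem continuous_zoomIncl (i : IsolPts Y) : Continuous (zoomIncl X i) := by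
  refine continuous_generateFrom_iff.2 ?_
  rintro _ (⟨j, W, hW, rfl⟩ | ⟨U, hU, rfl⟩)
  · have hpre : IsOpen (Sigma.mk i ⁻¹' (Sigma.mk j '' W)) := by
      obtain rfl | hij := eq_or_ne j i
      · rwa [sigma_mk_preimage_image_eq_self]
      · rw [sigma_mk_preimage_image' hij]
        exact isOpen_empty
    convert hpre using 1
    ext
    exact Sum.inr_injective.mem_set_image
  · rw [← zoomProj_preimage, ← preimage_comp]
    exact (continuous_const : Continuous fun _ : X i => (i : Y)).isOpen_preimage U hU

theorem continuous_zoomSection (pt : ∀ i, X i) : Continuous (zoomSection pt) := by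
  refine continuous_generateFrom_iff.2 ?_
  rintro _ (⟨i, W, -, rfl⟩ | ⟨U, hU, rfl⟩)
  · -- only `i` can be sent into the piece `X i`, and `{i}` is open
    have hsub : zoomSection pt ⁻¹' (Sum.inr '' (Sigma.mk i '' W) : Set (ZoomCarrier Y X)) ⊆
        {(i : Y)} := by
      rintro y ⟨_, ⟨w, -, rfl⟩, hy⟩
      rw [mem_singleton_iff, ← zoomProj_zoomSection pt y, ← hy]
      rfl
    rcases subset_singleton_iff_eq.1 hsub with h | h
    · exact (congrArg IsOpen h).mpr isOpen_empty
    · exact (congrArg IsOpen h).mpr i.2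
  · rw [← zoomProj_preimage, ← preimage_comp,
      show zoomProj X ∘ zoomSection pt = id from funext (zoomProj_zoomSection pt)]
    exact hU

theorem isClosed_zoomSub_univ {B : ∀ i, Set (X i)} (hB : ∀ i, IsClosed (B i)) :
    IsClosed (zoomSub Y X univ B) := by
  rw [← isOpen_compl_iff, isOpen_iff_forall_mem_open]
  rintro (y | ⟨i, x⟩) hz
  · exact absurd trivial hz
  · refine ⟨zoomIncl X i '' (B i)ᶜ, ?_, isOpen_image_zoomIncl i (hB i).isOpen_compl,
      mem_image_of_mem _ hz⟩
    rintro _ ⟨w, hw, rfl⟩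
    exact hw

theorem zoomSub_univ_mem_suslinF {B : ∀ i, Set (X i)} (hB : ∀ i, B i ∈ SuslinF (X i)) :
    zoomSub Y X univ B ∈ SuslinF (ZoomCarrier Y X) := by
  choose C hC hBC using hB
  refine ⟨fun s => zoomSub Y X univ fun i => C i s,
    fun s => isClosed_zoomSub_univ fun i => hC i s, ?_⟩
  rw [← zoomSub_univ_suslinOp, ← funext hBC]

theorem zoomSub_univ_mem_fborel {a : Ordinal.{0}} (ha : a < omega1) {B : ∀ i, Set (X i)}
    (hB : ∀ i, B i ∈ FBorel (X i) a) : zoomSub Y X univ B ∈ FBorel (ZoomCarrier Y X) a := by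
  induction a using WellFoundedLT.induction generalizing B with
  | ind a ih =>
  rcases eq_or_ne a 0 with rfl | ha0
  · simp only [fborel_zero, mem_ofPred_eq] at hB ⊢
    exact isClosed_zoomSub_univ hB
  obtain ⟨c, hca, hcof⟩ := exists_cofinal_seq_of_lt_omega1 ha0 ha
  choose f hf hBf using fun i => exists_levelOp_of_mem_fborel ha0 hcof (hB i)
  rw [funext hBf, zoomSub_univ_levelOp]
  exact (mem_fborel_iff ha0).2 ⟨_, fun k => ⟨_, hca _,
    ih _ (hca _) ((hca _).trans ha) fun i => hf i k⟩, rfl⟩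

theorem zoomSub_univ_mem_fclass {a : Ordinal.{0}} {B : ∀ i, Set (X i)}
    (hB : ∀ i, B i ∈ FClass (X i) a) : zoomSub Y X univ B ∈ FClass (ZoomCarrier Y X) a := by
  unfold FClass at *
  split_ifs with h
  · exact zoomSub_univ_mem_fborel h fun i => by simpa only [h, if_true] using hB i
  · exact zoomSub_univ_mem_suslinF fun i => by simpa only [h, if_false] using hB i

end Zoom

theorem zoom_space_complexity_general (Yb : Type u) [TopologicalSpace Yb]
    (Xb : IsolPts Yb → Type u) [∀ i, TopologicalSpace (Xb i)]
    (Ys : Set Yb) (hYd : Dense Ys)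
    (A : ∀ i : IsolPts Yb, Set (Xb i)) (hA : ∀ i, (A i).Nonempty)
    (hdef : zoomSub Yb Xb Ys A ∈ SuslinF (ZoomCarrier Yb Xb) ∨
      (Ys ∈ SuslinF Yb ∧ ∀ i, A i ∈ SuslinF (Xb i))) :
    ComplIn (ZoomCarrier Yb Xb) (zoomSub Yb Xb Ys A) =
      max (ComplIn Yb Ys) (⨆ i : IsolPts Yb, ComplIn (Xb i) (A i)) := by
  have hIsol := isolPts_subset_of_dense hYd
  choose pt hpt using hA
  have hYZ := zoomSection_preimage_zoomSub hIsol hpt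
  obtain ⟨hYs, hAs⟩ : Ys ∈ SuslinF Yb ∧ ∀ i, A i ∈ SuslinF (Xb i) := by
    refine hdef.elim (fun hZ => ⟨?_, fun i => ?_⟩) id
    · exact hYZ ▸ suslinF_preimage (continuous_zoomSection pt) hZ
    · exact zoomIncl_preimage_zoomSub i Ys A ▸ suslinF_preimage (continuous_zoomIncl i) hZ
  have hAbdd : BddAbove (range fun i => ComplIn (Xb i) (A i)) :=
    ⟨omega1, forall_mem_range.2 fun i => (complIn_mem (hAs i)).1⟩
  have hM : max (ComplIn Yb Ys) (⨆ i, ComplIn (Xb i) (A i)) ≤ omega1 :=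
    max_le (complIn_mem hYs).1 (ciSup_le' fun i => (complIn_mem (hAs i)).1)
  have hZM : zoomSub Yb Xb Ys A ∈
      FClass (ZoomCarrier Yb Xb) (max (ComplIn Yb Ys) (⨆ i, ComplIn (Xb i) (A i))) := by
    rw [zoomSub_eq_preimage_inter hIsol]
    refine fclass_inter (fclass_preimage continuous_zoomProj
      (fclass_mono (le_max_left _ _) hM (complIn_mem hYs).2))
      (zoomSub_univ_mem_fclass fun i => ?_)
    exact fclass_mono ((le_ciSup hAbdd i).trans (le_max_right _ _)) hM (complIn_mem (hAs i)).2
  have hZ := fclass_subset_suslinF _ hZM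
  refine le_antisymm (complIn_le hM hZM) (max_le ?_ (ciSup_le' fun i => ?_))
  · simpa only [hYZ] using complIn_preimage_le (continuous_zoomSection pt) hZ
  · exact zoomIncl_preimage_zoomSub i Ys A ▸ complIn_preimage_le (continuous_zoomIncl i) hZ

/-- The complexity of a zoom space `Z(Y, X)` inside `Z(Ỹ, X̃)` (for `Y`
dense in `Ỹ` and `X i ⊆ X̃ i`) is the maximum of the complexity of `Y` in `Ỹ` and the
supremum of the complexities of the `X i` in the `X̃ i`, whenever one of the sides is
defined. -/
theorem zoom_space_complexity (Yb : Type u) [TopologicalSpace Yb] [T35Space Yb]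
    (Xb : IsolPts Yb → Type u) [∀ i, TopologicalSpace (Xb i)] [∀ i, T35Space (Xb i)]
    (Ys : Set Yb) (hYd : Dense Ys)
    (A : ∀ i : IsolPts Yb, Set (Xb i)) (hA : ∀ i, (A i).Nonempty)
    (hdef : zoomSub Yb Xb Ys A ∈ SuslinF (ZoomCarrier Yb Xb) ∨
      (Ys ∈ SuslinF Yb ∧ ∀ i, A i ∈ SuslinF (Xb i))) :
    ComplIn (ZoomCarrier Yb Xb) (zoomSub Yb Xb Ys A) =
      max (ComplIn Yb Ys) (⨆ i : IsolPts Yb, ComplIn (Xb i) (A i)) :=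
  zoom_space_complexity_general Yb Xb Ys hYd A hA hdef

end FBorelPaper
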